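/- arXiv:1412.1384 — 3 statements merged into one kernel-verified Lean document; each statement's English description precedes it below -/
import Mathlib

section
/- Let P_λ be the probability measure on ℝ with density (1/(2√(2πt)))·( e^{-(x-√(2λ)t)²/(2t)} + e^{-(x+√(2λ)t)²/(2t)} ) for fixed t > 0. Then for 0 ≤ λ₁ ≤ λ₂ and every convex function u : ℝ → ℝ (integrable w.r.t. both measures), ∫ u dP_{λ₁} ≤ ∫ u dP_{λ₂}. -/
open Real MeasureTheory

noncomputable def ballisticDensity (t l x : ℝ) : ℝ :=
  1 / (2 * Real.sqrt (2 * π * t)) *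
    (Real.exp (-(x - Real.sqrt (2 * l) * t) ^ 2 / (2 * t)) +
     Real.exp (-(x + Real.sqrt (2 * l) * t) ^ 2 / (2 * t)))

noncomputable def ballisticMeasure (t l : ℝ) : Measure ℝ :=
  volume.withDensity (fun x => ENNReal.ofReal (ballisticDensity t l x))

/-!
With `m = √(2λ) t`, `P_λ` is the law of `X + m B` where `X ~ N(0, t)` and `B` is an independent
uniform sign, so `∫ u dP_λ = ½ E[u (X + m) + u (X - m)]`. For convex `u` the symmetric sum
`u (x + m) + u (x - m)` is nondecreasing in `m ≥ 0`: when `|a| ≤ b`, the points `x ± a` are convex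
combinations of `x ± b` with the same two weights in swapped order. Integrating against `X` gives
the claim.
-/

open Set ProbabilityTheory
open scoped ENNReal

theorem ConvexOn.apply_add_add_apply_sub_le {u : ℝ → ℝ} (hu : ConvexOn ℝ univ u) {a b : ℝ}
    (hab : |a| ≤ b) (x : ℝ) : u (x + a) + u (x - a) ≤ u (x + b) + u (x - b) := by
  obtain rfl | hb := (abs_nonneg a |>.trans hab).eq_or_lt
  · rw [abs_nonpos_iff.1 hab]
  have ha := abs_le.1 hab
  set θ := (b + a) / (2 * b)
  have hθ₀ : 0 ≤ θ := div_nonneg (by linarith) (by positivity)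
  have hθ₁ : 0 ≤ 1 - θ := by
    rw [sub_nonneg, div_le_one (by positivity)]
    linarith
  have hadd := hu.2 (mem_univ (x + b)) (mem_univ (x - b)) hθ₀ hθ₁ (add_sub_cancel _ _)
  have hsub := hu.2 (mem_univ (x + b)) (mem_univ (x - b)) hθ₁ hθ₀ (sub_add_cancel _ _)
  have eadd : θ • (x + b) + (1 - θ) • (x - b) = x + a := by
    simp only [smul_eq_mul, θ]; field_simp; ring
  have esub : (1 - θ) • (x + b) + θ • (x - b) = x - a := by
    simp only [smul_eq_mul, θ]; field_simp; ring
  rw [eadd] at hadd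
  rw [esub] at hsub
  simp only [smul_eq_mul] at hadd hsub
  linear_combination hadd + hsub

/-- The law of `X + m B` for `X ~ μ` and an independent uniform sign `B`. -/
noncomputable def rademacherShift (μ : Measure ℝ) (m : ℝ) : Measure ℝ :=
  (2⁻¹ : ℝ≥0∞) • (μ.map (· + m) + μ.map (· - m))

section RademacherShift

variable {μ : Measure ℝ} {m : ℝ} {u : ℝ → ℝ}

theorem integrable_rademacherShift_iff :
    Integrable u (rademacherShift μ m) ↔
      Integrable (fun x => u (x + m)) μ ∧ Integrable (fun x => u (x - m)) μ := by
  rw [rademacherShift, integrable_smul_measure (by norm_num) (by norm_num),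
    integrable_add_measure, (measurableEmbedding_addRight m).integrable_map_iff,
    (measurableEmbedding_subRight m).integrable_map_iff]
  rfl

theorem integral_rademacherShift (hu : Integrable u (rademacherShift μ m)) :
    ∫ x, u x ∂(rademacherShift μ m) = 2⁻¹ * ∫ x, u (x + m) + u (x - m) ∂μ := by
  obtain ⟨hadd, hsub⟩ := integrable_rademacherShift_iff.1 hu
  rw [rademacherShift, integral_smul_measure,
    integral_add_measure ((measurableEmbedding_addRight m).integrable_map_iff.2 hadd)
      ((measurableEmbedding_subRight m).integrable_map_iff.2 hsub),
    (measurableEmbedding_addRight m).integral_map, (measurableEmbedding_subRight m).integral_map,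
    integral_add hadd hsub]
  simp

theorem integral_rademacherShift_mono (hu : ConvexOn ℝ univ u) {m₁ m₂ : ℝ} (hm : |m₁| ≤ m₂)
    (h₁ : Integrable u (rademacherShift μ m₁)) (h₂ : Integrable u (rademacherShift μ m₂)) :
    ∫ x, u x ∂(rademacherShift μ m₁) ≤ ∫ x, u x ∂(rademacherShift μ m₂) := by
  obtain ⟨h₁a, h₁s⟩ := integrable_rademacherShift_iff.1 h₁
  obtain ⟨h₂a, h₂s⟩ := integrable_rademacherShift_iff.1 h₂
  rw [integral_rademacherShift h₁, integral_rademacherShift h₂]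
  gcongr ?_ * ?_
  exact integral_mono (h₁a.add h₁s) (h₂a.add h₂s) (hu.apply_add_add_apply_sub_le hm)

end RademacherShift

theorem ballisticDensity_eq_gaussianPDFReal {t : ℝ} (ht : 0 ≤ t) (l x : ℝ) :
    ballisticDensity t l x = 2⁻¹ * (gaussianPDFReal (√(2 * l) * t) t.toNNReal x
      + gaussianPDFReal (-(√(2 * l) * t)) t.toNNReal x) := by
  simp only [ballisticDensity, gaussianPDFReal, Real.coe_toNNReal t ht, sub_neg_eq_add]
  ring

theorem ballisticMeasure_eq_rademacherShift {t : ℝ} (ht : 0 < t) (l : ℝ) :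
    ballisticMeasure t l = rademacherShift (gaussianReal 0 t.toNNReal) (√(2 * l) * t) := by
  have hv : t.toNNReal ≠ 0 := by simpa using ht
  rw [rademacherShift, gaussianReal_map_add_const, gaussianReal_map_sub_const, zero_add, zero_sub,
    gaussianReal_of_var_ne_zero _ hv, gaussianReal_of_var_ne_zero _ hv,
    ← withDensity_add_left (measurable_gaussianPDF _ _), ← withDensity_smul _
      ((measurable_gaussianPDF _ _).add (measurable_gaussianPDF _ _)), ballisticMeasure]
  congr 1
  funext x
  rw [ballisticDensity_eq_gaussianPDFReal ht.le, ENNReal.ofReal_mul (by norm_num),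
    ENNReal.ofReal_add (gaussianPDFReal_nonneg _ _ _) (gaussianPDFReal_nonneg _ _ _),
    ENNReal.ofReal_inv_of_pos two_pos, ENNReal.ofReal_ofNat]
  rfl

theorem ballistic_convex_order_general (t : ℝ) (ht : 0 < t) (l₁ l₂ : ℝ)
    (h₁₂ : l₁ ≤ l₂) (u : ℝ → ℝ)
    (hu : ConvexOn ℝ Set.univ u)
    (hInt₁ : Integrable u (ballisticMeasure t l₁))
    (hInt₂ : Integrable u (ballisticMeasure t l₂)) :
    (∫ x, u x ∂(ballisticMeasure t l₁)) ≤ ∫ x, u x ∂(ballisticMeasure t l₂) := by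
  simp only [ballisticMeasure_eq_rademacherShift ht] at hInt₁ hInt₂ ⊢
  refine integral_rademacherShift_mono hu ?_ hInt₁ hInt₂
  rw [abs_of_nonneg (by positivity)]
  gcongr

theorem ballistic_convex_order (t : ℝ) (ht : 0 < t) (l₁ l₂ : ℝ)
    (h₁ : 0 ≤ l₁) (h₁₂ : l₁ ≤ l₂) (u : ℝ → ℝ)
    (hu : ConvexOn ℝ Set.univ u)
    (hInt₁ : Integrable u (ballisticMeasure t l₁))
    (hInt₂ : Integrable u (ballisticMeasure t l₂)) :
    (∫ x, u x ∂(ballisticMeasure t l₁)) ≤ ∫ x, u x ∂(ballisticMeasure t l₂) :=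
  ballistic_convex_order_general t ht l₁ l₂ h₁₂ u hu hInt₁ hInt₂
end

section
/- Let b be C¹, odd, with b'(0) < 0, and let σ > 0. If λ > −b'(0)/σ², then the density P(x) = N·cosh(√(2λ)x)·e^{2B(x)/σ²} has a strict local minimum at x = 0 (P''(0) > 0), whereas the density P₀(x) = N₀·e^{2B(x)/σ²} has a strict local maximum at x = 0 (P₀''(0) < 0). -/
/-! Writing `P = N cosh(c x) e^{F(x)}` with `F = 2B/σ²`, one has `F'(0) = 2b(0)/σ² = 0` by
oddness, so `0` is a critical point of both densities and `P''(0) = N (c² + F''(0)) e^{F(0)}`. With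
`c² = 2λ` and `F''(0) = 2b'(0)/σ²` this is positive exactly when `λ > -b'(0)/σ²`, while
`P₀` is the case `c = 0`, where it has the sign of `b'(0) < 0`. The second-derivative test
concludes. -/

open Real MeasureTheory intervalIntegral

section CoshMulExp

variable {F f : ℝ → ℝ} {f' : ℝ} (A c : ℝ)

lemma hasDerivAt_cosh_mul_exp {x : ℝ} (hF : HasDerivAt F (f x) x) :
    HasDerivAt (fun y => A * cosh (c * y) * exp (F y))
      (A * ((c * sinh (c * x) + cosh (c * x) * f x) * exp (F x))) x := by
  have hcosh : HasDerivAt (fun y => cosh (c * y)) (sinh (c * x) * c) x := by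
    simpa using ((hasDerivAt_id x).const_mul c).cosh
  exact ((hcosh.const_mul A).fun_mul hF.exp).congr_deriv (by ring)

lemma hasDerivAt_deriv_cosh_mul_exp_zero (hF : HasDerivAt F (f 0) 0) (hf : HasDerivAt f f' 0)
    (hf0 : f 0 = 0) :
    HasDerivAt (fun x => A * ((c * sinh (c * x) + cosh (c * x) * f x) * exp (F x)))
      (A * (c ^ 2 + f') * exp (F 0)) 0 := by
  have hsinh : HasDerivAt (fun x => sinh (c * x)) (cosh (c * 0) * c) 0 := by
    simpa using ((hasDerivAt_id (0 : ℝ)).const_mul c).sinh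
  have hcosh : HasDerivAt (fun x => cosh (c * x)) (sinh (c * 0) * c) 0 := by
    simpa using ((hasDerivAt_id (0 : ℝ)).const_mul c).cosh
  refine ((((hsinh.const_mul c).fun_add (hcosh.fun_mul hf)).fun_mul hF.exp).const_mul A
    ).congr_deriv ?_
  simp only [mul_zero, sinh_zero, cosh_zero, hf0]
  ring

lemma deriv_cosh_mul_exp (hF : ∀ x, HasDerivAt F (f x) x) :
    deriv (fun x => A * cosh (c * x) * exp (F x)) =
      fun x => A * ((c * sinh (c * x) + cosh (c * x) * f x) * exp (F x)) :=
  funext fun x => (hasDerivAt_cosh_mul_exp A c (hF x)).deriv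

lemma deriv_deriv_cosh_mul_exp_zero (hF : ∀ x, HasDerivAt F (f x) x) (hf : HasDerivAt f f' 0)
    (hf0 : f 0 = 0) :
    deriv (deriv fun x => A * cosh (c * x) * exp (F x)) 0 = A * (c ^ 2 + f') * exp (F 0) := by
  rw [deriv_cosh_mul_exp A c hF]
  exact (hasDerivAt_deriv_cosh_mul_exp_zero A c (hF 0) hf hf0).deriv

lemma deriv_cosh_mul_exp_zero (hF : ∀ x, HasDerivAt F (f x) x) (hf0 : f 0 = 0) :
    deriv (fun x => A * cosh (c * x) * exp (F x)) 0 = 0 := by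
  simp [deriv_cosh_mul_exp A c hF, hf0]

variable {A c}

lemma isLocalMin_cosh_mul_exp (hF : ∀ x, HasDerivAt F (f x) x) (hf : HasDerivAt f f' 0)
    (hf0 : f 0 = 0) (hpos : 0 < A * (c ^ 2 + f')) :
    0 < deriv (deriv fun x => A * cosh (c * x) * exp (F x)) 0 ∧
      IsLocalMin (fun x => A * cosh (c * x) * exp (F x)) 0 := by
  have hsecond : 0 < deriv (deriv fun x => A * cosh (c * x) * exp (F x)) 0 := by
    rw [deriv_deriv_cosh_mul_exp_zero A c hF hf hf0]
    positivity
  exact ⟨hsecond, isLocalMin_of_deriv_deriv_pos hsecond (deriv_cosh_mul_exp_zero A c hF hf0)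
    (hasDerivAt_cosh_mul_exp A c (hF 0)).continuousAt⟩

lemma isLocalMax_cosh_mul_exp (hF : ∀ x, HasDerivAt F (f x) x) (hf : HasDerivAt f f' 0)
    (hf0 : f 0 = 0) (hneg : A * (c ^ 2 + f') < 0) :
    deriv (deriv fun x => A * cosh (c * x) * exp (F x)) 0 < 0 ∧
      IsLocalMax (fun x => A * cosh (c * x) * exp (F x)) 0 := by
  have hsecond : deriv (deriv fun x => A * cosh (c * x) * exp (F x)) 0 < 0 := by
    rw [deriv_deriv_cosh_mul_exp_zero A c hF hf hf0]
    exact mul_neg_of_neg_of_pos hneg (exp_pos _)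
  exact ⟨hsecond, isLocalMax_of_deriv_deriv_neg hsecond (deriv_cosh_mul_exp_zero A c hF hf0)
    (hasDerivAt_cosh_mul_exp A c (hF 0)).continuousAt⟩

end CoshMulExp

theorem dmps_changes_modality (b : ℝ → ℝ) (hb : ContDiff ℝ 1 b)
    (hodd : ∀ x, b (-x) = -b x) (hb0 : deriv b 0 < 0)
    (σ l N N₀ : ℝ) (hσ : 0 < σ) (hN : 0 < N) (hN₀ : 0 < N₀)
    (hl : -deriv b 0 / σ ^ 2 < l)
    (B : ℝ → ℝ) (hB : B = fun x => ∫ ξ in (0:ℝ)..x, b ξ)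
    (P P₀ : ℝ → ℝ)
    (hP : P = fun x => N * Real.cosh (Real.sqrt (2 * l) * x) * exp (2 * B x / σ ^ 2))
    (hP₀ : P₀ = fun x => N₀ * exp (2 * B x / σ ^ 2)) :
    (0 < deriv (deriv P) 0 ∧ IsLocalMin P 0) ∧
    (deriv (deriv P₀) 0 < 0 ∧ IsLocalMax P₀ 0) := by
  have hσ2 : 0 < σ ^ 2 := by positivity
  have hF : ∀ x, HasDerivAt (fun y => 2 * B y / σ ^ 2) (2 * b x / σ ^ 2) x := fun x =>
    ((hB ▸ (hb.continuous.integral_hasStrictDerivAt 0 x).hasDerivAt).const_mul 2).div_const _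
  have hf : HasDerivAt (fun y => 2 * b y / σ ^ 2) (2 * deriv b 0 / σ ^ 2) 0 :=
    (((hb.differentiable one_ne_zero) 0).hasDerivAt.const_mul 2).div_const _
  have hf0 : 2 * b 0 / σ ^ 2 = 0 := by simp [Function.Odd.map_zero hodd]
  have hl' : 0 < l + deriv b 0 / σ ^ 2 := by linarith [neg_div (σ ^ 2) (deriv b 0)]
  have hP₀' : P₀ = fun x => N₀ * cosh (0 * x) * exp (2 * B x / σ ^ 2) := by simp [hP₀]
  refine ⟨hP ▸ isLocalMin_cosh_mul_exp hF hf hf0 ?_,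
    hP₀' ▸ isLocalMax_cosh_mul_exp hF hf hf0 ?_⟩
  · rw [sq_sqrt (by linarith [div_neg_of_neg_of_pos hb0 hσ2])]
    exact mul_pos hN (by linarith [mul_div_assoc 2 (deriv b 0) (σ ^ 2)])
  · rw [zero_pow two_ne_zero, zero_add]
    exact mul_neg_of_pos_of_neg hN₀ (div_neg_of_neg_of_pos (by linarith) hσ2)
end

section
/- For each fixed t > 0, the function λ ↦ ∫_{-∞}^{x} ∫_{-∞}^{y} (1/(2√(2πt)))( e^{-(u-√(2λ)t)²/(2t)} + e^{-(u+√(2λ)t)²/(2t)} ) du dy is nondecreasing in λ ≥ 0 for every x ∈ ℝ. -/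
/-!
Write `G y = ∫_{-∞}^y f` and `J z = ∫_{-∞}^z G` for the centred kernel
`f u = e^{-u²/(2t)} / (2√(2πt))`. Shifting variables turns the double integral into
`J (x - μ) + J (x + μ)` with `μ = √(2λ) t`. As `G` is nondecreasing, `J` is convex: the increment
of `J` over `[x - μ₂, x - μ₁]` is at most its increment over the translate `[x + μ₁, x + μ₂]`,
so pulling the two points apart symmetrically can only increase the sum. The bound
`e^{-u²/(2t)} ≤ e^{t/2} e^u` keeps all the improper integrals finite.
-/

open Real MeasureTheory Set

theorem integrableOn_Iic_comp_add_right_iff {E : Type*} [NormedAddCommGroup E] {g : ℝ → E}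
    (s x : ℝ) : IntegrableOn (fun y => g (y + s)) (Iic x) ↔ IntegrableOn g (Iic (x + s)) := by
  simpa [Function.comp_def] using
    (measurePreserving_add_right volume s).integrableOn_comp_preimage
      (measurableEmbedding_addRight s) (f := g) (s := Iic (x + s))

theorem integral_Iic_comp_add_right {E : Type*} [NormedAddCommGroup E] [NormedSpace ℝ E]
    (g : ℝ → E) (s x : ℝ) : ∫ y in Iic x, g (y + s) = ∫ y in Iic (x + s), g y := by
  simpa using (measurePreserving_add_right volume s).setIntegral_preimage_emb
    (measurableEmbedding_addRight s) g (Iic (x + s))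

theorem Monotone.monotoneOn_integral_Iic_sub_add_integral_Iic_add {G : ℝ → ℝ} (hG : Monotone G)
    (hGi : ∀ z, IntegrableOn G (Iic z)) (x : ℝ) :
    MonotoneOn (fun μ => (∫ y in Iic (x - μ), G y) + ∫ y in Iic (x + μ), G y) (Ici 0) := by
  intro μ₁ hμ₁ μ₂ _ hμ
  have h_left : (∫ y in Iic (x - μ₁), G y) - ∫ y in Iic (x - μ₂), G y =
      ∫ y in x - μ₂..x - μ₁, G y :=
    intervalIntegral.integral_Iic_sub_Iic (hGi _) (hGi _)
  have h_right : (∫ y in Iic (x + μ₂), G y) - ∫ y in Iic (x + μ₁), G y =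
      ∫ y in x + μ₁..x + μ₂, G y :=
    intervalIntegral.integral_Iic_sub_Iic (hGi _) (hGi _)
  have h_shift : ∫ y in x - μ₂..x - μ₁, G y ≤ ∫ y in x + μ₁..x + μ₂, G y :=
    calc ∫ y in x - μ₂..x - μ₁, G y ≤ ∫ y in x - μ₂..x - μ₁, G (y + (μ₁ + μ₂)) :=
          intervalIntegral.integral_mono_on (by linarith) hG.intervalIntegrable
            (hG.comp fun _ _ h => add_le_add_left h _).intervalIntegrable
            fun y _ => hG (by linarith [mem_Ici.1 hμ₁])
      _ = ∫ y in x + μ₁..x + μ₂, G y := by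
          rw [intervalIntegral.integral_comp_add_right]; congr 1 <;> ring
  simp only
  linarith

section Density

variable {f : ℝ → ℝ}

theorem monotone_integral_Iic_of_nonneg (hf : Integrable f) (hf₀ : 0 ≤ f) :
    Monotone fun y => ∫ u in Iic y, f u :=
  fun _ _ hab => setIntegral_mono_set hf.integrableOn (.of_forall hf₀)
    (Iic_subset_Iic.2 hab).eventuallyLE

theorem integral_Iic_le_mul_exp (hf : Integrable f) {C : ℝ} (hfC : ∀ u, f u ≤ C * exp u)
    (y : ℝ) : ∫ u in Iic y, f u ≤ C * exp y :=
  calc ∫ u in Iic y, f u ≤ ∫ u in Iic y, C * exp u :=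
        setIntegral_mono hf.integrableOn ((integrableOn_exp_Iic y).const_mul C) hfC
    _ = C * exp y := by rw [integral_const_mul, integral_exp_Iic]

theorem integrableOn_Iic_integral_Iic (hf : Integrable f) (hf₀ : 0 ≤ f) {C : ℝ}
    (hfC : ∀ u, f u ≤ C * exp u) (z : ℝ) :
    IntegrableOn (fun y => ∫ u in Iic y, f u) (Iic z) :=
  ((integrableOn_exp_Iic z).const_mul C).mono'
    (monotone_integral_Iic_of_nonneg hf hf₀).measurable.aestronglyMeasurable <|
    .of_forall fun y => by
      rw [norm_of_nonneg (setIntegral_nonneg measurableSet_Iic fun u _ => hf₀ u)]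
      exact integral_Iic_le_mul_exp hf hfC y

theorem integral_Iic_integral_Iic_comp_sub_add_comp_add (hf : Integrable f) (hf₀ : 0 ≤ f)
    {C : ℝ} (hfC : ∀ u, f u ≤ C * exp u) (x μ : ℝ) :
    ∫ y in Iic x, ∫ u in Iic y, (f (u - μ) + f (u + μ)) =
      (∫ y in Iic (x - μ), ∫ u in Iic y, f u) + ∫ y in Iic (x + μ), ∫ u in Iic y, f u := by
  have hG := integrableOn_Iic_integral_Iic hf hf₀ hfC
  simp_rw [sub_eq_add_neg, integral_add (hf.comp_add_right _).integrableOn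
    (hf.comp_add_right _).integrableOn, integral_Iic_comp_add_right f]
  rw [integral_add ((integrableOn_Iic_comp_add_right_iff _ _).2 (hG _))
    ((integrableOn_Iic_comp_add_right_iff _ _).2 (hG _)),
    integral_Iic_comp_add_right (fun y => ∫ u in Iic y, f u),
    integral_Iic_comp_add_right (fun y => ∫ u in Iic y, f u)]

theorem monotoneOn_integral_Iic_integral_Iic_comp_sub_add_comp_add (hf : Integrable f)
    (hf₀ : 0 ≤ f) {C : ℝ} (hfC : ∀ u, f u ≤ C * exp u) (x : ℝ) :
    MonotoneOn (fun μ => ∫ y in Iic x, ∫ u in Iic y, (f (u - μ) + f (u + μ))) (Ici 0) := by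
  simp_rw [integral_Iic_integral_Iic_comp_sub_add_comp_add hf hf₀ hfC]
  exact (monotone_integral_Iic_of_nonneg hf hf₀).monotoneOn_integral_Iic_sub_add_integral_Iic_add
    (integrableOn_Iic_integral_Iic hf hf₀ hfC) x

end Density

section GaussianKernel

variable {t : ℝ}

theorem integrable_exp_neg_sq_div (ht : 0 < t) : Integrable fun u => exp (-u ^ 2 / (2 * t)) := by
  convert integrable_exp_neg_mul_sq (b := 1 / (2 * t)) (by positivity) using 3
  ring

theorem exp_neg_sq_div_le (ht : 0 < t) (u : ℝ) :
    exp (-u ^ 2 / (2 * t)) ≤ exp (t / 2) * exp u := by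
  rw [← exp_add, exp_le_exp, div_le_iff₀ (by positivity)]
  nlinarith [sq_nonneg (u + t)]

end GaussianKernel

theorem second_integral_condition_monotone (t : ℝ) (ht : 0 < t) (x : ℝ) :
    MonotoneOn (fun l : ℝ =>
      ∫ y in Set.Iic x, ∫ u in Set.Iic y,
        1 / (2 * Real.sqrt (2 * π * t)) *
          (exp (-(u - Real.sqrt (2 * l) * t) ^ 2 / (2 * t)) +
           exp (-(u + Real.sqrt (2 * l) * t) ^ 2 / (2 * t))))
      (Set.Ici (0:ℝ)) := by
  set c := 1 / (2 * Real.sqrt (2 * π * t))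
  have hc : 0 ≤ c := by positivity
  have h_mono := monotoneOn_integral_Iic_integral_Iic_comp_sub_add_comp_add
    ((integrable_exp_neg_sq_div ht).const_mul c) (fun u => by positivity) (C := c * exp (t / 2))
    (fun u => by rw [mul_assoc]; exact mul_le_mul_of_nonneg_left (exp_neg_sq_div_le ht u) hc) x
  have h_drift : MonotoneOn (fun l : ℝ => Real.sqrt (2 * l) * t) (Ici 0) :=
    fun _ _ _ _ hl => mul_le_mul_of_nonneg_right (sqrt_le_sqrt (by linarith)) ht.le
  simp_rw [mul_add]
  exact h_mono.comp h_drift fun l _ => mem_Ici.2 (by positivity)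
end
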